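/- Let V be a finite set with N := |V| divisible by 4, and let b, c : ZMod 4 → ZMod 2 satisfy c(0) + c(2) = b(0) + b(2) and c(1) + c(3) = b(1) + b(3). For U, U₁ ⊆ V put b_U := b(|U| mod 4), c_{U,U₁} := c(|U Δ U₁| mod 4) for U ≠ U₁ and c_{U,U} := 0, and for S ⊆ V put c^{(S)}_{U,U₁} := c_{U,U₁} + b_U + b_{U₁} + c_{T_S(U),T_S(U₁)} + b_{T_S(U)} + b_{T_S(U₁)} and b^{(S)}_U := b_U + b_{T_S(U)}, where T_S(U) := U if |U ∩ S| is even and T_S(U) := V ∖ (U Δ S) if |U ∩ S| is odd. Then for all S, Q, Q₁ ⊆ V with Q ≠ Q₁: (i) c^{(S)}_{Q,Q₁} + ∑_{z₁ ∈ Q₁} c^{(S)}_{Q,{z₁}} + ∑_{z ∈ Q} c^{(S)}_{{z},Q₁} + ∑_{z ∈ Q, z₁ ∈ Q₁, z ≠ z₁} c^{(S)}_{{z},{z₁}} = 0; and (ii) for all S, Q ⊆ V: ∑_{z ∈ Q} c^{(S)}_{Q,{z}} + ∑_{two-element subsets {z,z'} ⊆ Q} c^{(S)}_{{z},{z'}}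 = b^{(S)}_Q + ∑_{z ∈ Q} b^{(S)}_{{z}} (the sum over two-element subsets is well defined since c^{(S)} is symmetric in its two arguments). -/

import Mathlib

open scoped symmDiff

/-- `T_S(U) := U` if `|U ∩ S|` is even, and `T_S(U) := V ∖ (U Δ S)` if `|U ∩ S|` is odd. -/
def TSmap {V : Type*} [Fintype V] [DecidableEq V] (S U : Finset V) : Finset V :=
  if Even (U ∩ S).card then U else (U ∆ S)ᶜ

/-- `b_U := b(|U| mod 4)`. -/
def bU {V : Type*} [DecidableEq V] (b : ZMod 4 → ZMod 2) (U : Finset V) : ZMod 2 :=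
  b (U.card : ZMod 4)

/-- `c_{U,U₁} := c(|U Δ U₁| mod 4)` for `U ≠ U₁`, and `c_{U,U} := 0`. -/
def cUU {V : Type*} [DecidableEq V] (c : ZMod 4 → ZMod 2) (U U₁ : Finset V) : ZMod 2 :=
  if U = U₁ then 0 else c (((U ∆ U₁).card : ZMod 4))

/-- `c^{(S)}_{U,U₁} := c_{U,U₁} + b_U + b_{U₁} + c_{T_S(U),T_S(U₁)} + b_{T_S(U)} + b_{T_S(U₁)}`. -/
def cS {V : Type*} [Fintype V] [DecidableEq V] (b c : ZMod 4 → ZMod 2)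
    (S U U₁ : Finset V) : ZMod 2 :=
  cUU c U U₁ + bU b U + bU b U₁ + cUU c (TSmap S U) (TSmap S U₁) +
    bU b (TSmap S U) + bU b (TSmap S U₁)

/-- `b^{(S)}_U := b_U + b_{T_S(U)}`. -/
def bS {V : Type*} [Fintype V] [DecidableEq V] (b : ZMod 4 → ZMod 2)
    (S U : Finset V) : ZMod 2 :=
  bU b U + bU b (TSmap S U)

/-!
Write `ε(U) := |U ∩ S| mod 2`. The map `T_S` is additive for `Δ` and, because `4 ∣ |V|`, sends
a set `U` with `ε(U) = 1` to a set of size `2 - |S| - |U|` mod 4. Hence `b^{(S)}_U = ε(U) β(|U|)`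
and `c^{(S)}_{U,U₁} = b^{(S)}_U + b^{(S)}_{U₁} + ε(U Δ U₁) γ(|U Δ U₁|)`, where
`β n = b n + b (2 - |S| - n)` and `γ n = c n + c (2 - |S| - n)`. Automatically `∑ β = 0`, and the
hypotheses on `b, c` make `γ - β` constant. Each sum over singletons and pairs then has a closed
form in `|Q|`, `|Q₁|`, `|Q ∩ Q₁|` and the parities `ε(Q)`, `ε(Q₁)`, `ε(Q ∩ Q₁)`, and both identities
reduce to a check over residues mod 4.
-/

open Finset

section Parity

variable {V : Type*} [DecidableEq V]

theorem card_symmDiff_add_two_mul_card_inter (A B : Finset V) :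
    #(A ∆ B) + 2 * #(A ∩ B) = #A + #B := by
  have hdisj : Disjoint (A \ B) (B \ A) := disjoint_sdiff_sdiff
  rw [symmDiff_def, sup_eq_union, card_union_of_disjoint hdisj]
  have hA := card_sdiff_add_card_inter A B
  have hB := card_sdiff_add_card_inter B A
  rw [inter_comm B A] at hB
  omega

theorem cast_card_symmDiff_four (A B : Finset V) :
    (#(A ∆ B) : ZMod 4) = #A + #B + 2 * #(A ∩ B) := by
  have h := congrArg (Nat.cast : ℕ → ZMod 4) (card_symmDiff_add_two_mul_card_inter A B)
  push_cast at h
  linear_combination h - (#(A ∩ B) : ZMod 4) * ZMod.natCast_self 4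

theorem cast_card_symmDiff_two (A B : Finset V) : (#(A ∆ B) : ZMod 2) = #A + #B := by
  have h := congrArg (Nat.cast : ℕ → ZMod 2) (card_symmDiff_add_two_mul_card_inter A B)
  push_cast at h
  linear_combination h - (#(A ∩ B) : ZMod 2) * ZMod.natCast_self 2

def interParity (S U : Finset V) : ZMod 2 := #(U ∩ S)

variable (S : Finset V)

@[simp]
theorem interParity_empty : interParity S ∅ = 0 := by simp [interParity]

theorem interParity_symmDiff (U W : Finset V) :
    interParity S (U ∆ W) = interParity S U + interParity S W := by
  rw [interParity, ← inf_eq_inter, inf_symmDiff_distrib_right, cast_card_symmDiff_two]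
  rfl

theorem sum_interParity_singleton (P : Finset V) :
    ∑ z ∈ P, interParity S {z} = interParity S P := by
  induction P using Finset.induction_on with
  | empty => simp
  | insert z P hz ih =>
    rw [sum_insert hz, ih, insert_eq, ← sup_eq_union,
      ← (disjoint_singleton_left.mpr hz).symmDiff_eq_sup, interParity_symmDiff]

def twist (β : ZMod 4 → ZMod 2) (U : Finset V) : ZMod 2 := interParity S U * β #U

theorem sum_twist_singleton (β : ZMod 4 → ZMod 2) (P : Finset V) :
    ∑ z ∈ P, twist S β {z} = interParity S P * β 1 := by
  simp only [twist, card_singleton, Nat.cast_one, ← sum_mul, sum_interParity_singleton]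

theorem twist_symmDiff_singleton (γ : ZMod 4 → ZMod 2) (Q : Finset V) (z : V) :
    twist S γ (Q ∆ {z}) = (interParity S Q + interParity S {z}) *
      (γ (#Q + 1) + if z ∈ Q then γ (#Q + 3) - γ (#Q + 1) else 0) := by
  rw [twist, interParity_symmDiff, cast_card_symmDiff_four, card_singleton]
  by_cases hz : z ∈ Q
  · rw [inter_singleton_of_mem hz, if_pos hz, card_singleton]
    ring_nf
  · rw [inter_singleton_of_notMem hz, if_neg hz, card_empty]
    ring_nf

theorem sum_twist_symmDiff_singleton (γ : ZMod 4 → ZMod 2) (Q P : Finset V) :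
    ∑ z ∈ P, twist S γ (Q ∆ {z}) =
      (#P * interParity S Q + interParity S P) * γ (#Q + 1) +
      (#(P ∩ Q) * interParity S Q + interParity S (P ∩ Q)) * (γ (#Q + 3) - γ (#Q + 1)) := by
  simp only [twist_symmDiff_singleton, mul_add, mul_ite, mul_zero, sum_add_distrib, sum_ite_mem,
    ← sum_mul, sum_const, nsmul_eq_mul, sum_interParity_singleton]

end Parity

section Pairs

variable {V : Type*} [DecidableEq V]

theorem sum_sum_erase_add (f : V → ZMod 2) (Q Q₁ : Finset V) :
    ∑ z ∈ Q, ∑ z₁ ∈ Q₁.erase z, (f z + f z₁) = #Q₁ * ∑ z ∈ Q, f z + #Q * ∑ z ∈ Q₁, f z := by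
  have herase (z : V) : ∑ z₁ ∈ Q₁.erase z, (f z + f z₁) = ∑ z₁ ∈ Q₁, (f z + f z₁) :=
    sum_erase Q₁ (CharTwo.add_self_eq_zero (f z))
  simp only [herase, sum_add_distrib, sum_const, nsmul_eq_mul, mul_sum]

theorem sum_sum_filter_lt_add [LinearOrder V] {M : Type*} [AddCommMonoid M] (f : V → M)
    (Q : Finset V) :
    ∑ z ∈ Q, ∑ z' ∈ Q with z < z', (f z + f z') = ∑ z ∈ Q, #(Q.erase z) • f z := by
  have hswap : ∑ z ∈ Q, ∑ z' ∈ Q with z < z', f z' = ∑ z ∈ Q, ∑ z' ∈ Q with z' < z, f z := by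
    simp only [sum_filter]
    exact sum_comm
  rw [sum_congr rfl fun z _ => sum_add_distrib, sum_add_distrib, hswap, ← sum_add_distrib]
  refine sum_congr rfl fun z _ => ?_
  rw [← sum_const, ← filter_ne' Q z]
  simp only [sum_filter, ← sum_add_distrib]
  refine sum_congr rfl fun z' _ => ?_
  rcases lt_trichotomy z z' with h | rfl | h
  · simp [h, h.ne', not_lt_of_gt h]
  · simp
  · simp [h, h.ne, not_lt_of_gt h]

end Pairs

section TwistCochain

variable {V : Type*} [DecidableEq V] (S : Finset V) (β γ : ZMod 4 → ZMod 2)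

def twistCochain (U W : Finset V) : ZMod 2 := twist S β U + twist S β W + twist S γ (U ∆ W)

theorem twistCochain_comm (U W : Finset V) : twistCochain S β γ U W = twistCochain S β γ W U := by
  rw [twistCochain, twistCochain, symmDiff_comm, add_comm (twist S β U)]

theorem twistCochain_singleton_singleton {z z' : V} (h : z ≠ z') :
    twistCochain S β γ {z} {z'} = (interParity S {z} + interParity S {z'}) * (β 1 + γ 2) := by
  have hcard : (#({z} ∆ {z'}) : ZMod 4) = 2 := by
    rw [cast_card_symmDiff_four, singleton_inter_of_notMem (by simpa using h)]
    simp only [card_singleton, card_empty]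
    rfl
  simp only [twistCochain, twist, interParity_symmDiff, hcard, card_singleton, Nat.cast_one]
  ring

theorem sum_twistCochain_singleton_right (Q P : Finset V) :
    ∑ z ∈ P, twistCochain S β γ Q {z} =
      #P * twist S β Q + interParity S P * β 1 +
      ((#P * interParity S Q + interParity S P) * γ (#Q + 1) +
        (#(P ∩ Q) * interParity S Q + interParity S (P ∩ Q)) * (γ (#Q + 3) - γ (#Q + 1))) := by
  simp only [twistCochain, sum_add_distrib, sum_const, nsmul_eq_mul, sum_twist_singleton,
    sum_twist_symmDiff_singleton]

theorem sum_twistCochain_singleton_left (Q P : Finset V) :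
    ∑ z ∈ P, twistCochain S β γ {z} Q =
      #P * twist S β Q + interParity S P * β 1 +
      ((#P * interParity S Q + interParity S P) * γ (#Q + 1) +
        (#(P ∩ Q) * interParity S Q + interParity S (P ∩ Q)) * (γ (#Q + 3) - γ (#Q + 1))) := by
  simp only [twistCochain_comm S β γ _ Q, sum_twistCochain_singleton_right]

theorem sum_sum_erase_twistCochain (Q Q₁ : Finset V) :
    ∑ z ∈ Q, ∑ z₁ ∈ Q₁.erase z, twistCochain S β γ {z} {z₁} =
      (#Q₁ * interParity S Q + #Q * interParity S Q₁) * (β 1 + γ 2) := by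
  have hpair (z : V) : ∑ z₁ ∈ Q₁.erase z, twistCochain S β γ {z} {z₁} =
      (∑ z₁ ∈ Q₁.erase z, (interParity S {z} + interParity S {z₁})) * (β 1 + γ 2) := by
    rw [sum_mul]
    exact sum_congr rfl fun z₁ hz₁ =>
      twistCochain_singleton_singleton S β γ (ne_of_mem_erase hz₁).symm
  simp only [hpair, ← sum_mul, sum_sum_erase_add, sum_interParity_singleton]

theorem sum_sum_filter_lt_twistCochain [LinearOrder V] (Q : Finset V) :
    ∑ z ∈ Q, ∑ z' ∈ Q with z < z', twistCochain S β γ {z} {z'} =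
      (#Q - 1) * interParity S Q * (β 1 + γ 2) := by
  have hpair (z : V) : ∑ z' ∈ Q with z < z', twistCochain S β γ {z} {z'} =
      (∑ z' ∈ Q with z < z', (interParity S {z} + interParity S {z'})) * (β 1 + γ 2) := by
    rw [sum_mul]
    exact sum_congr rfl fun z' hz' => twistCochain_singleton_singleton S β γ (mem_filter.1 hz').2.ne
  have herase : ∑ z ∈ Q, (#(Q.erase z) • interParity S {z}) = (#Q - 1) * interParity S Q := by
    rw [← sum_interParity_singleton, mul_sum]
    exact sum_congr rfl fun z hz => by rw [nsmul_eq_mul, cast_card_erase_of_mem hz]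
  simp only [hpair, ← sum_mul, sum_sum_filter_lt_add, herase]

end TwistCochain

section Residues

theorem zmod_two_cases (x : ZMod 2) : x = 0 ∨ x = 1 := by decide +revert

theorem zmod_four_cases (x : ZMod 4) : x = 0 ∨ x = 1 ∨ x = 2 ∨ x = 3 := by decide +revert

variable {β γ : ZMod 4 → ZMod 2} {σ : ZMod 2}

theorem cocycle_residue_identity (hβ : ∑ n, β n = 0) (hγ : ∀ n, γ n = β n + σ) (q q₁ i : ℕ)
    (a a₁ t : ZMod 2) :
    a * β q + a₁ * β q₁ + (a + a₁) * γ (q + q₁ + 2 * i) +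
      (q₁ * (a * β q) + a₁ * β 1 +
        ((q₁ * a + a₁) * γ (q + 1) + (i * a + t) * (γ (q + 3) - γ (q + 1)))) +
      (q * (a₁ * β q₁) + a * β 1 +
        ((q * a₁ + a) * γ (q₁ + 1) + (i * a₁ + t) * (γ (q₁ + 3) - γ (q₁ + 1)))) +
      (q₁ * a + q * a₁) * (β 1 + γ 2) = 0 := by
  have hβ' : β 0 + β 1 + β 2 + β 3 = 0 := (Fin.sum_univ_four β).symm.trans hβ
  let π := ZMod.castHom (by norm_num : 2 ∣ 4) (ZMod 2)
  simp only [hγ, ← map_natCast π q, ← map_natCast π q₁, ← map_natCast π i]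
  generalize (q : ZMod 4) = x, (q₁ : ZMod 4) = x₁, (i : ZMod 4) = y
  rcases zmod_four_cases x with rfl | rfl | rfl | rfl <;>
  rcases zmod_four_cases x₁ with rfl | rfl | rfl | rfl <;>
  rcases zmod_four_cases y with rfl | rfl | rfl | rfl <;>
  · simp only [map_zero, map_one, map_ofNat]
    reduce_mod_char
    grind

theorem diagonal_residue_identity (hβ : ∑ n, β n = 0) (hγ : ∀ n, γ n = β n + σ) (q : ℕ)
    (a : ZMod 2) :
    q * (a * β q) + a * β 1 + ((q * a + a) * γ (q + 1) + (q * a + a) * (γ (q + 3) - γ (q + 1))) +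
      (q - 1) * a * (β 1 + γ 2) = a * β q + a * β 1 := by
  have hβ' : β 0 + β 1 + β 2 + β 3 = 0 := (Fin.sum_univ_four β).symm.trans hβ
  let π := ZMod.castHom (by norm_num : 2 ∣ 4) (ZMod 2)
  simp only [hγ, ← map_natCast π q]
  generalize (q : ZMod 4) = x
  rcases zmod_four_cases x with rfl | rfl | rfl | rfl <;>
  · simp only [map_zero, map_one, map_ofNat]
    reduce_mod_char
    grind

end Residues

section Cocycle

variable {V : Type*} [DecidableEq V] (S : Finset V) {β γ : ZMod 4 → ZMod 2} {σ : ZMod 2}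

theorem twistCochain_cocycle (hβ : ∑ n, β n = 0) (hγ : ∀ n, γ n = β n + σ) (Q Q₁ : Finset V) :
    twistCochain S β γ Q Q₁ + ∑ z₁ ∈ Q₁, twistCochain S β γ Q {z₁} +
      ∑ z ∈ Q, twistCochain S β γ {z} Q₁ +
      ∑ z ∈ Q, ∑ z₁ ∈ Q₁.erase z, twistCochain S β γ {z} {z₁} = 0 := by
  rw [sum_twistCochain_singleton_right, sum_twistCochain_singleton_left,
    sum_sum_erase_twistCochain, twistCochain, inter_comm Q₁ Q]
  simp only [twist, interParity_symmDiff, cast_card_symmDiff_four]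
  exact cocycle_residue_identity hβ hγ _ _ _ _ _ _

theorem twistCochain_diagonal [LinearOrder V] (hβ : ∑ n, β n = 0) (hγ : ∀ n, γ n = β n + σ)
    (Q : Finset V) :
    ∑ z ∈ Q, twistCochain S β γ Q {z} +
        ∑ z ∈ Q, ∑ z' ∈ Q with z < z', twistCochain S β γ {z} {z'} =
      twist S β Q + ∑ z ∈ Q, twist S β {z} := by
  rw [sum_twistCochain_singleton_right, sum_sum_filter_lt_twistCochain, sum_twist_singleton,
    inter_self]
  exact diagonal_residue_identity hβ hγ _ _

end Cocycle

section TSmap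

variable {V : Type*} [Fintype V] [DecidableEq V] (S : Finset V)

theorem TSmap_of_interParity_eq_zero {U : Finset V} (h : interParity S U = 0) :
    TSmap S U = U :=
  if_pos (ZMod.natCast_eq_zero_iff_even.1 h)

theorem TSmap_of_interParity_eq_one {U : Finset V} (h : interParity S U = 1) :
    TSmap S U = (U ∆ S)ᶜ :=
  if_neg (Nat.not_even_iff_odd.2 (ZMod.natCast_eq_one_iff_odd.1 h))

theorem interParity_TSmap (U : Finset V) : interParity S (TSmap S U) = interParity S U := by
  rcases zmod_two_cases (interParity S U) with h | h
  · rw [TSmap_of_interParity_eq_zero S h]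
  · rw [TSmap_of_interParity_eq_one S h, interParity, interParity]
    congr 2
    ext x
    simp only [mem_inter, mem_compl, mem_symmDiff]
    tauto

theorem TSmap_symmDiff (U W : Finset V) :
    TSmap S (U ∆ W) = TSmap S U ∆ TSmap S W := by
  have hUW := interParity_symmDiff S U W
  rcases zmod_two_cases (interParity S U) with hU | hU <;>
  rcases zmod_two_cases (interParity S W) with hW | hW <;>
  simp only [hU, hW, add_zero, zero_add, CharTwo.add_self_eq_zero] at hUW <;>
  simp only [TSmap_of_interParity_eq_zero, TSmap_of_interParity_eq_one, hU, hW, hUW] <;>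
  ext x <;> simp only [mem_compl, mem_symmDiff] <;> tauto

theorem cast_card_TSmap_of_interParity_eq_one (h4 : 4 ∣ Fintype.card V) {U : Finset V}
    (h : interParity S U = 1) : (#(TSmap S U) : ZMod 4) = 2 - #S - #U := by
  obtain ⟨k, hk⟩ := ZMod.natCast_eq_one_iff_odd.1 h
  rw [TSmap_of_interParity_eq_one S h, card_compl, Nat.cast_sub (card_le_univ _),
    (ZMod.natCast_eq_zero_iff _ _).2 h4, cast_card_symmDiff_four, hk]
  push_cast
  linear_combination (-(k : ZMod 4) - 1) * ZMod.natCast_self 4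

def mirrorSum (s : ZMod 4) (f : ZMod 4 → ZMod 2) (n : ZMod 4) : ZMod 2 := f n + f (2 - s - n)

theorem sum_mirrorSum (s : ZMod 4) (f : ZMod 4 → ZMod 2) : ∑ n, mirrorSum s f n = 0 := by
  simp only [mirrorSum]
  rw [sum_add_distrib,
    Fintype.sum_equiv (Equiv.subLeft (2 - s)) (fun n => f (2 - s - n)) f fun _ => rfl]
  exact CharTwo.add_self_eq_zero _

theorem apply_card_add_apply_card_TSmap (h4 : 4 ∣ Fintype.card V) (f : ZMod 4 → ZMod 2)
    (U : Finset V) : f #U + f #(TSmap S U) = twist S (mirrorSum #S f) U := by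
  rcases zmod_two_cases (interParity S U) with h | h
  · rw [TSmap_of_interParity_eq_zero S h, twist, h, zero_mul]
    exact CharTwo.add_self_eq_zero _
  · rw [cast_card_TSmap_of_interParity_eq_one S h4 h, twist, h, one_mul]
    rfl

theorem bS_eq_twist (h4 : 4 ∣ Fintype.card V) (b : ZMod 4 → ZMod 2) :
    bS b S = twist S (mirrorSum #S b) :=
  funext (apply_card_add_apply_card_TSmap S h4 b)

theorem cUU_eq_cUU_empty_symmDiff (c : ZMod 4 → ZMod 2) (U W : Finset V) :
    cUU c U W = cUU c ∅ (U ∆ W) := by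
  simp only [cUU, ← bot_eq_empty, bot_symmDiff, eq_comm (a := ⊥), symmDiff_eq_bot]

theorem cUU_empty_add_cUU_empty_TSmap (h4 : 4 ∣ Fintype.card V) (c : ZMod 4 → ZMod 2)
    (X : Finset V) : cUU c ∅ X + cUU c ∅ (TSmap S X) = twist S (mirrorSum #S c) X := by
  rcases zmod_two_cases (interParity S X) with h | h
  · rw [TSmap_of_interParity_eq_zero S h, twist, h, zero_mul]
    exact CharTwo.add_self_eq_zero _
  · have hX : ∅ ≠ X := by
      rintro rfl
      simp at h
    have hTX : ∅ ≠ TSmap S X := by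
      intro he
      have := interParity_TSmap S X
      rw [← he, interParity_empty, h] at this
      exact zero_ne_one this
    rw [cUU, cUU, if_neg hX, if_neg hTX, ← bot_eq_empty, bot_symmDiff, bot_symmDiff]
    exact apply_card_add_apply_card_TSmap S h4 c X

theorem cS_eq_twistCochain (h4 : 4 ∣ Fintype.card V) (b c : ZMod 4 → ZMod 2) :
    cS b c S = twistCochain S (mirrorSum #S b) (mirrorSum #S c) := by
  funext U W
  have hc := cUU_empty_add_cUU_empty_TSmap S h4 c (U ∆ W)
  rw [TSmap_symmDiff, ← cUU_eq_cUU_empty_symmDiff, ← cUU_eq_cUU_empty_symmDiff] at hc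
  rw [twistCochain, ← hc, ← bS_eq_twist S h4]
  simp only [cS, bS]
  ring

theorem mirrorSum_eq_mirrorSum_add (b c : ZMod 4 → ZMod 2) (hbc02 : c 0 + c 2 = b 0 + b 2)
    (hbc13 : c 1 + c 3 = b 1 + b 3) (s : ℕ) (n : ZMod 4) :
    mirrorSum s c n = mirrorSum s b n + s * (b 0 + c 0 + b 1 + c 1) := by
  let π := ZMod.castHom (by norm_num : 2 ∣ 4) (ZMod 2)
  rw [← map_natCast π s]
  generalize (s : ZMod 4) = x
  rcases zmod_four_cases x with rfl | rfl | rfl | rfl <;>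
  rcases zmod_four_cases n with rfl | rfl | rfl | rfl <;>
  · simp only [mirrorSum, map_zero, map_one, map_ofNat]
    reduce_mod_char
    grind

end TSmap

theorem stmt12 {V : Type*} [Fintype V] [LinearOrder V]
    (h4 : 4 ∣ Fintype.card V) (b c : ZMod 4 → ZMod 2)
    (hbc02 : c 0 + c 2 = b 0 + b 2) (hbc13 : c 1 + c 3 = b 1 + b 3) :
    (∀ S Q Q₁ : Finset V, Q ≠ Q₁ →
      cS b c S Q Q₁ + (∑ z₁ ∈ Q₁, cS b c S Q {z₁}) + (∑ z ∈ Q, cS b c S {z} Q₁) +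
        (∑ z ∈ Q, ∑ z₁ ∈ Q₁.erase z, cS b c S {z} {z₁}) = 0) ∧
    (∀ S Q : Finset V,
      (∑ z ∈ Q, cS b c S Q {z}) +
        (∑ z ∈ Q, ∑ z' ∈ Q.filter (fun z' => z < z'), cS b c S {z} {z'}) =
      bS b S Q + ∑ z ∈ Q, bS b S {z}) := by
  have hc := mirrorSum_eq_mirrorSum_add b c hbc02 hbc13
  refine ⟨fun S Q Q₁ _ => ?_, fun S Q => ?_⟩
  · rw [cS_eq_twistCochain S h4]
    exact twistCochain_cocycle S (sum_mirrorSum _ b) (hc #S) Q Q₁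
  · rw [cS_eq_twistCochain S h4, bS_eq_twist S h4]
    exact twistCochain_diagonal S (sum_mirrorSum _ b) (hc #S) Q
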